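/- arXiv:math/0505632 — 5 statements merged into one kernel-verified Lean document; each statement's English description precedes it below -/
import Mathlib

section
/- Suppose β > 1 and C > 0, and suppose a vector (ν_1, …, ν_n) of reals satisfies Σ_{i=1}^n ν_i² i^β ≤ C² n ρ_n² where ρ_n = √(2 log n). Let n₀ be the number of indices i with |ν_i| ≥ 1. Then there is a constant C' depending only on C and β such that n₀ ≤ C' · (n ρ_n²)^{1/(1+β)}. In particular, n₀ = o(√n) as n → ∞ when β > 1. -/
open Filter Finset

/-!
Order the set of indices with `|ν i| ≥ 1` increasingly: at least half of its `n₀` elements are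
`≥ n₀ / 2`, so the weighted constraint forces `(n₀ / 2) ^ (1 + β) ≤ C² n ρ_n²`. Taking the
`1 / (1 + β)`-th power gives the bound, and `1 / (1 + β) < 1 / 2` makes it `o(√n)`.
-/

open Real in
lemma Finset.half_card_rpow_le_sum_add_one_rpow (s : Finset ℕ) {β : ℝ} (hβ : 0 ≤ β) :
    ((#s : ℝ) / 2) ^ (1 + β) ≤ ∑ i ∈ s, ((i : ℝ) + 1) ^ β := by
  set k := #s / 2
  have hcard : (#s : ℝ) / 2 ≤ #(s \ range k) := by
    have h := le_card_sdiff (range k) s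
    rw [card_range] at h
    have h2 : #s ≤ 2 * #(s \ range k) := by omega
    rw [div_le_iff₀ two_pos, mul_comm]
    exact_mod_cast h2
  have hlarge : ∀ i ∈ s \ range k, ((#s : ℝ) / 2) ^ β ≤ ((i : ℝ) + 1) ^ β := by
    intro i hi
    have hki : k ≤ i := by simpa using (mem_sdiff.1 hi).2
    have h2 : #s ≤ 2 * (i + 1) := by omega
    have h2' : (#s : ℝ) / 2 ≤ (i : ℝ) + 1 := by
      rw [div_le_iff₀ two_pos, mul_comm]
      exact_mod_cast h2
    exact rpow_le_rpow (by positivity) h2' hβ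
  calc ((#s : ℝ) / 2) ^ (1 + β) = (#s : ℝ) / 2 * ((#s : ℝ) / 2) ^ β := by
        rw [rpow_add' (by positivity) (by linarith), rpow_one]
    _ ≤ #(s \ range k) * ((#s : ℝ) / 2) ^ β := by gcongr
    _ ≤ ∑ i ∈ s \ range k, ((i : ℝ) + 1) ^ β := by
        simpa [nsmul_eq_mul] using card_nsmul_le_sum _ _ _ hlarge
    _ ≤ ∑ i ∈ s, ((i : ℝ) + 1) ^ β :=
        sum_le_sum_of_subset_of_nonneg sdiff_subset fun _ _ _ => by positivity

lemma Finset.sum_filter_one_le_abs_le_sum_sq_mul {ι : Type*} (s : Finset ι) (ν w : ι → ℝ)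
    (hw : ∀ i ∈ s, 0 ≤ w i) : ∑ i ∈ s with 1 ≤ |ν i|, w i ≤ ∑ i ∈ s, ν i ^ 2 * w i := by
  rw [sum_filter]
  refine sum_le_sum fun i hi => ?_
  split_ifs with h
  · exact le_mul_of_one_le_left (hw i hi) (one_le_sq_iff_one_le_abs _ |>.2 h)
  · exact mul_nonneg (sq_nonneg _) (hw i hi)

lemma half_card_one_le_abs_rpow_le_weighted_sum {n : ℕ} (ν : Fin n → ℝ) {β : ℝ} (hβ : 0 ≤ β) :
    ((#{i | 1 ≤ |ν i|} : ℝ) / 2) ^ (1 + β) ≤ ∑ i : Fin n, ν i ^ 2 * ((i : ℝ) + 1) ^ β := by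
  set S : Finset (Fin n) := {i | 1 ≤ |ν i|}
  calc ((#S : ℝ) / 2) ^ (1 + β) = ((#(S.map Fin.valEmbedding) : ℝ) / 2) ^ (1 + β) := by
        rw [card_map]
    _ ≤ ∑ i ∈ S.map Fin.valEmbedding, ((i : ℝ) + 1) ^ β :=
        half_card_rpow_le_sum_add_one_rpow _ hβ
    _ = ∑ i ∈ S, ((i : ℝ) + 1) ^ β := by rw [sum_map]; rfl
    _ ≤ ∑ i : Fin n, ν i ^ 2 * ((i : ℝ) + 1) ^ β :=
        sum_filter_one_le_abs_le_sum_sq_mul _ _ _ fun _ _ => by positivity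

open Real in
lemma tendsto_mul_const_mul_log_rpow_div_rpow_atTop {c e p : ℝ} (hc : 0 ≤ c) (hep : e < p) :
    Tendsto (fun x : ℝ => (x * (c * log x)) ^ e / x ^ p) atTop (nhds 0) := by
  have hlog : Tendsto (fun x : ℝ => log x ^ e / x ^ (p - e)) atTop (nhds 0) :=
    (isLittleO_log_rpow_rpow_atTop e (sub_pos.2 hep)).tendsto_div_nhds_zero
  have hconst := hlog.const_mul (c ^ e)
  rw [mul_zero] at hconst
  refine hconst.congr' ?_
  filter_upwards [eventually_ge_atTop 1] with x hx
  have hx0 : 0 < x := by linarith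
  rw [mul_rpow hx0.le (mul_nonneg hc (log_nonneg hx)), mul_rpow hc (log_nonneg hx),
    rpow_sub hx0]
  have : x ^ e ≠ 0 := by positivity
  field_simp

theorem stmt6 (β C : ℝ) (hβ : 1 < β) (hC : 0 < C) :
    (∃ C' : ℝ, 0 < C' ∧ ∀ n : ℕ, 2 ≤ n → ∀ ν : Fin n → ℝ,
      (∑ i : Fin n, ν i ^ 2 * ((i : ℝ) + 1) ^ β) ≤ C ^ 2 * n * (2 * Real.log n) →
      ((Finset.univ.filter fun i : Fin n => 1 ≤ |ν i|).card : ℝ)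
        ≤ C' * ((n : ℝ) * (2 * Real.log n)) ^ (1 / (1 + β)))
    ∧ Tendsto
        (fun n : ℕ => ((n : ℝ) * (2 * Real.log n)) ^ (1 / (1 + β)) / Real.sqrt n)
        atTop (nhds 0) := by
  have hβ' : 0 < 1 + β := by linarith
  refine ⟨⟨2 * (C ^ 2) ^ (1 / (1 + β)), by positivity, fun n _ ν hν => ?_⟩, ?_⟩
  · have hX : 0 ≤ (n : ℝ) * (2 * Real.log n) := by
      have := Real.log_natCast_nonneg n
      positivity
    have hcount := (half_card_one_le_abs_rpow_le_weighted_sum ν (by linarith)).trans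
      (hν.trans_eq (mul_assoc _ _ _))
    rw [← Real.le_rpow_inv_iff_of_pos (by positivity) (by positivity) hβ',
      Real.mul_rpow (by positivity) hX, ← one_div] at hcount
    linarith
  · have he : 1 / (1 + β) < 1 / 2 := one_div_lt_one_div_of_lt two_pos (by linarith)
    refine ((tendsto_mul_const_mul_log_rpow_div_rpow_atTop two_pos.le he).comp
      tendsto_natCast_atTop_atTop).congr fun n => ?_
    simp [Real.sqrt_eq_rpow]
end

section
/- Let γ > 1/2 and C > 0. Let (g_n) be a sequence of functions ℝ → ℝ that is equicontinuous at 0, satisfies ‖g_n‖_∞ ≤ M (log n)^α for some constants M, α > 0, and g_n(0) → a. Then for any sequence of vectors μ^{(n)} = (μ_1,…,μ_n) with Σ_{i=1}^n μ_i² i^{2γ} ≤ C² log n for all n, we have (1/n) Σ_{i=1}^n g_n(μ_i √n) → a, and the convergence is uniform over all such sequences (i.e., sup over μ^{(n)} satisfying the constraint of |(1/n)Σ g_n(μ_i√n) − a| → 0). -/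
/-!
Equicontinuity at 0 and the sup bound give, for every `x`,
`|g_n x - g_n 0| ≤ ε + 2 M (log n)^α |x| / δ`, so the average differs from `g_n 0` by at most
`ε + 2 M (log n)^α n^{-1/2} ∑ |μ_i| / δ`. Cauchy–Schwarz against the weights `i^{2γ}` bounds
`∑ |μ_i|` by `C (log n)^{1/2} (∑ i^{-2γ})^{1/2}`, a convergent series since `2γ > 1`. The error is
therefore `O((log n)^{α + 1/2} / √n)`, uniformly in `μ`.
-/

open Filter Finset Real Topology

lemma abs_sub_le_add_mul_abs_of_abs_le {f : ℝ → ℝ} {ε δ B : ℝ} (hδ : 0 < δ)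
    (hf₀ : ∀ x, |x| < δ → |f x - f 0| < ε) (hB : ∀ x, |f x| ≤ B) (x : ℝ) :
    |f x - f 0| ≤ ε + 2 * B / δ * |x| := by
  have hB₀ : 0 ≤ B := (abs_nonneg _).trans (hB 0)
  have hε : 0 < ε := by simpa using hf₀ 0 (by simpa using hδ)
  rcases lt_or_ge |x| δ with hx | hx
  · have : 0 ≤ 2 * B / δ * |x| := by positivity
    linarith [hf₀ x hx]
  · calc |f x - f 0| ≤ |f x| + |f 0| := abs_sub _ _
      _ ≤ 2 * B := by linarith [hB x, hB 0]
      _ ≤ 2 * B / δ * |x| := by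
        rw [div_mul_eq_mul_div, le_div_iff₀ hδ]
        exact mul_le_mul_of_nonneg_left hx (by positivity)
      _ ≤ ε + 2 * B / δ * |x| := by linarith

lemma sum_abs_le_sqrt_mul_sum_inv {ι : Type*} (s : Finset ι) (μ w : ι → ℝ)
    (hw : ∀ i ∈ s, 0 < w i) :
    ∑ i ∈ s, |μ i| ≤ √((∑ i ∈ s, μ i ^ 2 * w i) * ∑ i ∈ s, (w i)⁻¹) := by
  refine (le_abs_self _).trans (abs_le_sqrt ?_)
  refine sum_sq_le_sum_mul_sum_of_sq_le_mul s (fun i hi => by have := hw i hi; positivity)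
    (fun i hi => by have := hw i hi; positivity) fun i hi => ?_
  rw [mul_inv_cancel_right₀ (hw i hi).ne', sq_abs]

lemma sum_abs_le_sqrt_mul_tsum_of_sum_sq_mul_rpow_le {p S : ℝ} (hp : 1 < p) {n : ℕ}
    {μ : Fin n → ℝ} (hμ : ∑ i : Fin n, μ i ^ 2 * ((i : ℝ) + 1) ^ p ≤ S) :
    ∑ i, |μ i| ≤ √(S * ∑' i : ℕ, (((i : ℝ) + 1) ^ p)⁻¹) := by
  have hsummable : Summable fun i : ℕ => (((i : ℝ) + 1) ^ p)⁻¹ := by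
    simpa using (summable_nat_add_iff 1).2 (summable_nat_rpow_inv.2 hp)
  have htail : ∑ i : Fin n, (((i : ℝ) + 1) ^ p)⁻¹ ≤ ∑' i : ℕ, (((i : ℝ) + 1) ^ p)⁻¹ := by
    rw [Fin.sum_univ_eq_sum_range (fun i : ℕ => (((i : ℝ) + 1) ^ p)⁻¹)]
    exact hsummable.sum_le_tsum _ fun i _ => by positivity
  refine (sum_abs_le_sqrt_mul_sum_inv univ μ (fun i => ((i : ℝ) + 1) ^ p)
    fun i _ => by positivity).trans (sqrt_le_sqrt ?_)
  exact mul_le_mul hμ htail (sum_nonneg fun i _ => by positivity)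
    ((sum_nonneg fun i _ => by positivity).trans hμ)

lemma tendsto_log_rpow_mul_sqrt_log_div_sqrt (r : ℝ) :
    Tendsto (fun n : ℕ => log n ^ r * √(log n) / √n) atTop (𝓝 0) := by
  have h := ((isLittleO_log_rpow_rpow_atTop (r + 1 / 2) one_half_pos).tendsto_div_nhds_zero).comp
    tendsto_natCast_atTop_atTop
  refine h.congr' ?_
  filter_upwards [eventually_ge_atTop 2] with n hn
  have hlog : 0 < log n := log_pos (by exact_mod_cast hn)
  simp only [Function.comp_apply, sqrt_eq_rpow, rpow_add hlog]

lemma abs_average_sub_le {n : ℕ} (hn : 0 < n) {f : ℝ → ℝ} {ε c : ℝ}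
    (hf : ∀ y, |f y - f 0| ≤ ε + c * |y|) (x : Fin n → ℝ) (a : ℝ) :
    |(1 / (n : ℝ)) * ∑ i, f (x i * √n) - a| ≤ ε + c * (∑ i, |x i|) / √n + |f 0 - a| := by
  have hn' : (0 : ℝ) < n := by exact_mod_cast hn
  have hsplit : (1 / (n : ℝ)) * ∑ i, f (x i * √n) - a
      = (1 / (n : ℝ)) * ∑ i, (f (x i * √n) - f 0) + (f 0 - a) := by
    have hcancel : (1 / (n : ℝ)) * (n * f 0) = f 0 := by field_simp
    rw [sum_sub_distrib, sum_const, card_univ, Fintype.card_fin, nsmul_eq_mul]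
    linear_combination hcancel
  have hterm : ∑ i, |f (x i * √n) - f 0| ≤ n * ε + c * √n * ∑ i, |x i| := by
    calc ∑ i, |f (x i * √n) - f 0| ≤ ∑ i, (ε + c * √n * |x i|) := by
          refine sum_le_sum fun i _ => (hf _).trans_eq ?_
          rw [abs_mul, abs_of_nonneg (sqrt_nonneg _)]
          ring
      _ = n * ε + c * √n * ∑ i, |x i| := by
          rw [sum_add_distrib, sum_const, card_univ, Fintype.card_fin, nsmul_eq_mul, mul_sum]
  calc |(1 / (n : ℝ)) * ∑ i, f (x i * √n) - a|
      ≤ (1 / (n : ℝ)) * ∑ i, |f (x i * √n) - f 0| + |f 0 - a| := by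
        rw [hsplit]
        refine (abs_add_le _ _).trans (add_le_add_left ?_ _)
        rw [abs_mul, abs_of_pos (by positivity)]
        exact mul_le_mul_of_nonneg_left (abs_sum_le_sum_abs _ _) (by positivity)
    _ ≤ (1 / (n : ℝ)) * (n * ε + c * √n * ∑ i, |x i|) + |f 0 - a| := by gcongr
    _ = ε + c * (∑ i, |x i|) / √n + |f 0 - a| := by
        have : 0 < √(n : ℝ) := sqrt_pos.2 hn'
        field_simp
        linear_combination (c * ∑ i, |x i|) * mul_self_sqrt hn'.le

theorem stmt7_general (γ C M α a : ℝ) (hγ : 1 / 2 < γ)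
    (g : ℕ → ℝ → ℝ)
    (hequi : ∀ ε > 0, ∃ δ > 0, ∀ n : ℕ, ∀ x : ℝ, |x| < δ → |g n x - g n 0| < ε)
    (hbd : ∀ n : ℕ, 2 ≤ n → ∀ x : ℝ, |g n x| ≤ M * Real.log n ^ α)
    (hlim : Tendsto (fun n : ℕ => g n 0) atTop (nhds a)) :
    ∀ ε > 0, ∃ N : ℕ, ∀ n ≥ N, ∀ μ : Fin n → ℝ,
      (∑ i : Fin n, μ i ^ 2 * ((i : ℝ) + 1) ^ (2 * γ)) ≤ C ^ 2 * Real.log n →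
      |(1 / (n : ℝ)) * ∑ i : Fin n, g n (μ i * Real.sqrt n) - a| < ε := by
  intro ε hε
  obtain ⟨δ, hδ, hδε⟩ := hequi (ε / 3) (by positivity)
  set K := ∑' i : ℕ, (((i : ℝ) + 1) ^ (2 * γ))⁻¹
  have hsmall : ∀ᶠ n : ℕ in atTop,
      2 * M / δ * √(C ^ 2 * K) * (log n ^ α * √(log n) / √n) < ε / 3 := by
    have h := (tendsto_log_rpow_mul_sqrt_log_div_sqrt α).const_mul (2 * M / δ * √(C ^ 2 * K))
    rw [mul_zero] at h
    exact h.eventually_lt_const (by positivity)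
  have hclose : ∀ᶠ n : ℕ in atTop, |g n 0 - a| < ε / 3 := by
    simpa [Real.dist_eq] using hlim.eventually (Metric.ball_mem_nhds a (by positivity))
  obtain ⟨N, hN⟩ := eventually_atTop.mp ((hsmall.and hclose).and (eventually_ge_atTop 2))
  refine ⟨N, fun n hn μ hμ => ?_⟩
  obtain ⟨⟨hsmall_n, hclose_n⟩, hn2⟩ := hN n hn
  have hB : 0 ≤ M * log n ^ α := (abs_nonneg _).trans (hbd n hn2 0)
  have hμ₁ : ∑ i, |μ i| ≤ √(C ^ 2 * K) * √(log n) := by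
    rw [← sqrt_mul (by positivity), mul_right_comm]
    exact sum_abs_le_sqrt_mul_tsum_of_sum_sq_mul_rpow_le (by linarith) hμ
  calc |(1 / (n : ℝ)) * ∑ i, g n (μ i * √n) - a|
      ≤ ε / 3 + 2 * (M * log n ^ α) / δ * (∑ i, |μ i|) / √n + |g n 0 - a| :=
        abs_average_sub_le (by omega)
          (abs_sub_le_add_mul_abs_of_abs_le hδ (hδε n) (hbd n hn2)) μ a
    _ ≤ ε / 3 + 2 * (M * log n ^ α) / δ * (√(C ^ 2 * K) * √(log n)) / √n + |g n 0 - a| := by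
        gcongr
    _ = ε / 3 + 2 * M / δ * √(C ^ 2 * K) * (log n ^ α * √(log n) / √n) + |g n 0 - a| := by
        ring
    _ < ε := by linarith

theorem stmt7 (γ C M α a : ℝ) (hγ : 1 / 2 < γ) (hC : 0 < C) (hM : 0 < M) (hα : 0 < α)
    (g : ℕ → ℝ → ℝ)
    (hequi : ∀ ε > 0, ∃ δ > 0, ∀ n : ℕ, ∀ x : ℝ, |x| < δ → |g n x - g n 0| < ε)
    (hbd : ∀ n : ℕ, 2 ≤ n → ∀ x : ℝ, |g n x| ≤ M * Real.log n ^ α)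
    (hlim : Tendsto (fun n : ℕ => g n 0) atTop (nhds a)) :
    ∀ ε > 0, ∃ N : ℕ, ∀ n ≥ N, ∀ μ : Fin n → ℝ,
      (∑ i : Fin n, μ i ^ 2 * ((i : ℝ) + 1) ^ (2 * γ)) ≤ C ^ 2 * Real.log n →
      |(1 / (n : ℝ)) * ∑ i : Fin n, g n (μ i * Real.sqrt n) - a| < ε :=
  stmt7_general γ C M α a hγ g hequi hbd hlim
end

section
/- Define g_n(x) = 2u²ρ_n² + 2(x² − u²ρ_n²)(Φ(x + uρ_n) − Φ(x − uρ_n)) + 2(x − uρ_n)φ(x + uρ_n) − 2(x + uρ_n)φ(x − uρ_n) for fixed u ∈ (0,1] and ρ_n = √(2 log n). Then |g_n(0)| ≤ 6 ρ_n n^{−u²}, and hence g_n(0) → 0 as n → ∞. -/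
open Filter

noncomputable def gaussPdf (x : ℝ) : ℝ := (Real.sqrt (2 * Real.pi))⁻¹ * Real.exp (-x ^ 2 / 2)

noncomputable def gaussCdf (x : ℝ) : ℝ := ∫ t in Set.Iic x, gaussPdf t

noncomputable def gfun (u ρ : ℝ) (x : ℝ) : ℝ :=
  2 * u ^ 2 * ρ ^ 2
    + 2 * (x ^ 2 - u ^ 2 * ρ ^ 2) * (gaussCdf (x + u * ρ) - gaussCdf (x - u * ρ))
    + 2 * (x - u * ρ) * gaussPdf (x + u * ρ)
    - 2 * (x + u * ρ) * gaussPdf (x - u * ρ)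

/-!
At `x = 0` the symmetry of the Gaussian turns `g` into `4t (t Q(t) - φ(t))` with `t = uρ` and
`Q = 1 - Φ` the upper tail. The Mills-ratio bound `t Q(t) ≤ φ(t)`, which comes from
`∫_t^∞ t φ ≤ ∫_t^∞ x φ(x) dx = φ(t)`, squeezes this between `-4tφ(t)` and `0`, and
`φ(u √(2 log n)) = n^(-u²) / √(2π)`. Finally `√(log n) n^(-u²) → 0`.
-/

open MeasureTheory Real Set ProbabilityTheory

noncomputable def gaussTail (t : ℝ) : ℝ := ∫ x in Ioi t, gaussPdf x

lemma gaussPdf_pos (x : ℝ) : 0 < gaussPdf x := by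
  unfold gaussPdf
  positivity

lemma gaussPdf_neg (x : ℝ) : gaussPdf (-x) = gaussPdf x := by
  simp only [gaussPdf, neg_sq]

lemma gaussPdf_eq_gaussianPDFReal : gaussPdf = gaussianPDFReal 0 1 := by
  ext x
  simp [gaussPdf, gaussianPDFReal]

lemma integrable_gaussPdf : Integrable gaussPdf := by
  rw [gaussPdf_eq_gaussianPDFReal]
  exact integrable_gaussianPDFReal 0 1

lemma integral_gaussPdf : ∫ x, gaussPdf x = 1 := by
  rw [gaussPdf_eq_gaussianPDFReal]
  exact integral_gaussianPDFReal_eq_one 0 one_ne_zero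

lemma hasDerivAt_gaussPdf (x : ℝ) : HasDerivAt gaussPdf (-x * gaussPdf x) x := by
  have hexponent : HasDerivAt (fun y : ℝ => -y ^ 2 / 2) (-x) x :=
    (((hasDerivAt_pow 2 x).neg).div_const 2).congr_deriv (by norm_num; ring)
  exact (hexponent.exp.const_mul (√(2 * π))⁻¹).congr_deriv (by rw [gaussPdf]; ring)

lemma tendsto_gaussPdf_atTop : Tendsto gaussPdf atTop (nhds 0) := by
  have hexp : Tendsto (fun x : ℝ => exp (-x ^ 2 / 2)) atTop (nhds 0) :=
    tendsto_exp_atBot.comp <| (tendsto_neg_atTop_atBot.comp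
      (tendsto_pow_atTop two_ne_zero)).atBot_div_const (by norm_num)
  have h := hexp.const_mul (√(2 * π))⁻¹
  rw [mul_zero] at h
  exact h

lemma integrable_mul_gaussPdf : Integrable fun x => x * gaussPdf x := by
  have h := (integrable_mul_exp_neg_mul_sq (b := 1 / 2) (by norm_num)).const_mul
    (√(2 * π))⁻¹
  refine h.congr (ae_of_all _ fun x => ?_)
  simp only [gaussPdf]
  ring_nf

lemma integral_Ioi_mul_gaussPdf (t : ℝ) : ∫ x in Ioi t, x * gaussPdf x = gaussPdf t := by
  have h := integral_Ioi_of_hasDerivAt_of_tendsto' (f := fun y => -gaussPdf y) (a := t) (m := 0)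
    (fun x _ => (hasDerivAt_gaussPdf x).neg.congr_deriv (by ring))
    integrable_mul_gaussPdf.integrableOn
    (by simpa using tendsto_gaussPdf_atTop.neg)
  rwa [zero_sub, neg_neg] at h

lemma mul_gaussTail_le_gaussPdf (t : ℝ) : t * gaussTail t ≤ gaussPdf t := by
  rw [gaussTail, ← integral_const_mul, ← integral_Ioi_mul_gaussPdf t]
  exact setIntegral_mono_on (integrable_gaussPdf.const_mul t).integrableOn
    integrable_mul_gaussPdf.integrableOn measurableSet_Ioi
    fun x hx => mul_le_mul_of_nonneg_right (le_of_lt hx) (gaussPdf_pos x).le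

lemma gaussTail_nonneg (t : ℝ) : 0 ≤ gaussTail t :=
  setIntegral_nonneg measurableSet_Ioi fun x _ => (gaussPdf_pos x).le

lemma gaussCdf_neg (t : ℝ) : gaussCdf (-t) = gaussTail t := by
  rw [gaussCdf, gaussTail, ← integral_comp_neg_Ioi]
  simp only [gaussPdf_neg]

lemma gaussCdf_add_gaussTail (t : ℝ) : gaussCdf t + gaussTail t = 1 := by
  rw [gaussCdf, gaussTail, intervalIntegral.integral_Iic_add_Ioi integrable_gaussPdf.integrableOn
    integrable_gaussPdf.integrableOn, integral_gaussPdf]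

lemma gfun_zero (u ρ : ℝ) :
    gfun u ρ 0 = 4 * (u * ρ) * (u * ρ * gaussTail (u * ρ) - gaussPdf (u * ρ)) := by
  have hcdf : gaussCdf (u * ρ) = 1 - gaussTail (u * ρ) := by
    linarith [gaussCdf_add_gaussTail (u * ρ)]
  simp only [gfun, zero_add, zero_sub, gaussCdf_neg, gaussPdf_neg, hcdf]
  ring

lemma abs_gfun_zero_le {u ρ : ℝ} (h : 0 ≤ u * ρ) :
    |gfun u ρ 0| ≤ 4 * (u * ρ) * gaussPdf (u * ρ) := by
  have hmills := mul_gaussTail_le_gaussPdf (u * ρ)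
  have htail : 0 ≤ u * ρ * gaussTail (u * ρ) := mul_nonneg h (gaussTail_nonneg _)
  rw [gfun_zero, abs_le]
  constructor <;> nlinarith

lemma gaussPdf_mul_sqrt_two_log {x : ℝ} (hx : 1 ≤ x) (u : ℝ) :
    gaussPdf (u * √(2 * log x)) = (√(2 * π))⁻¹ * x ^ (-u ^ 2) := by
  have hlog : 0 ≤ 2 * log x := by linarith [log_nonneg hx]
  rw [gaussPdf, rpow_def_of_pos (by linarith), mul_pow, sq_sqrt hlog]
  ring_nf

lemma abs_gfun_sqrt_two_log_le {u x : ℝ} (hu0 : 0 ≤ u) (hu1 : u ≤ 1) (hx : 1 ≤ x) :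
    |gfun u √(2 * log x) 0| ≤ 6 * √(2 * log x) * x ^ (-u ^ 2) := by
  set ρ := √(2 * log x)
  have hρ : 0 ≤ ρ := sqrt_nonneg _
  have hpow : 0 ≤ x ^ (-u ^ 2) := rpow_nonneg (by linarith) _
  have hinv : (√(2 * π))⁻¹ ≤ 1 :=
    inv_le_one_of_one_le₀ (one_le_sqrt.mpr (by linarith [pi_gt_three]))
  calc |gfun u ρ 0| ≤ 4 * (u * ρ) * gaussPdf (u * ρ) := abs_gfun_zero_le (mul_nonneg hu0 hρ)
    _ = 4 * (u * ρ) * (√(2 * π))⁻¹ * x ^ (-u ^ 2) := by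
      rw [gaussPdf_mul_sqrt_two_log hx]
      ring
    _ ≤ 4 * (1 * ρ) * 1 * x ^ (-u ^ 2) := by gcongr
    _ ≤ 6 * ρ * x ^ (-u ^ 2) := by nlinarith [mul_nonneg hρ hpow]

lemma tendsto_sqrt_two_log_mul_rpow_neg {a : ℝ} (ha : 0 < a) :
    Tendsto (fun x : ℝ => √(2 * log x) * x ^ (-a)) atTop (nhds 0) := by
  have h := ((tendsto_rpow_mul_exp_neg_mul_atTop_nhds_zero (1 / 2) a ha).comp
    tendsto_log_atTop).const_mul √2
  rw [mul_zero] at h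
  refine h.congr' ?_
  filter_upwards [eventually_gt_atTop 1] with x hx
  rw [Function.comp_apply, sqrt_mul zero_le_two, sqrt_eq_rpow (log x),
    rpow_def_of_pos (by linarith : 0 < x) (-a)]
  ring_nf

theorem stmt10 (u : ℝ) (hu0 : 0 < u) (hu1 : u ≤ 1) :
    (∀ n : ℕ, 2 ≤ n →
      |gfun u (Real.sqrt (2 * Real.log n)) 0|
        ≤ 6 * Real.sqrt (2 * Real.log n) * (n : ℝ) ^ (-(u ^ 2)))
    ∧ Tendsto (fun n : ℕ => gfun u (Real.sqrt (2 * Real.log n)) 0) atTop (nhds 0) := by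
  have hbound (n : ℕ) (hn : 1 ≤ n) :=
    abs_gfun_sqrt_two_log_le hu0.le hu1 (Nat.one_le_cast.mpr hn : (1 : ℝ) ≤ n)
  refine ⟨fun n hn => hbound n (by omega), ?_⟩
  have hlim := ((tendsto_sqrt_two_log_mul_rpow_neg (pow_pos hu0 2)).comp
    tendsto_natCast_atTop_atTop).const_mul 6
  rw [mul_zero] at hlim
  refine squeeze_zero_norm' ?_ hlim
  filter_upwards [eventually_ge_atTop 1] with n hn
  rw [Real.norm_eq_abs, Function.comp_apply, ← mul_assoc]
  exact hbound n hn
end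

section
/- Soft-thresholding unbiased risk identity: let X ~ N(μ, σ_n²) with σ_n² = σ²/n, let t ≥ 0, and define the soft-threshold estimator μ̂ = sign(X)(|X| − t)₊. Then E[(μ̂ − μ)²] = E[σ_n² − 2σ_n²·1{X² ≤ t²} + min(X², t²)] (Stein's unbiased risk estimate for soft thresholding). -/
/-!
Write `softThresh t x = x - c x` with the clamp `c x = max (-t) (min x t)`. Expanding the square,
`E (X - μ)² = σ²`, `c² = min (x², t²)`, and the cross term is Stein's identity
`E[(X - μ) g(X)] = σ² E[g'(X)]` for the bounded, piecewise linear `g = c`, whose derivative off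
`{-t, t}` is the indicator of `x² ≤ t²`. Stein's identity itself is the fundamental theorem of
calculus for `g φ` on the whole line, `φ` the Gaussian density, since `φ' = -(x - μ) / σ² · φ`.
-/

open MeasureTheory ProbabilityTheory Filter Set Topology
open scoped NNReal

noncomputable def softThresh (t x : ℝ) : ℝ :=
  (if t < x then x - t else 0) + (if x < -t then x + t else 0)

theorem integral_of_hasDerivAt_off_countable_of_tendsto {E : Type*} [NormedAddCommGroup E]
    [NormedSpace ℝ E] [CompleteSpace E] {f f' : ℝ → E} {s : Set ℝ} {m n : E}
    (hs : s.Countable) (hf : Continuous f) (hderiv : ∀ x ∉ s, HasDerivAt f (f' x) x)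
    (hf' : Integrable f') (hbot : Tendsto f atBot (𝓝 m)) (htop : Tendsto f atTop (𝓝 n)) :
    ∫ x, f' x = n - m := by
  have hftc : ∀ R : ℝ, 0 ≤ R → ∫ x in -R..R, f' x = f R - f (-R) := fun R hR =>
    integral_eq_of_hasDerivAt_off_countable_of_le f f' (by linarith) hs hf.continuousOn
      (fun x hx => hderiv x hx.2) hf'.intervalIntegrable
  refine tendsto_nhds_unique (intervalIntegral_tendsto_integral hf' tendsto_neg_atTop_atBot
    tendsto_id) ((htop.sub (hbot.comp tendsto_neg_atTop_atBot)).congr' ?_)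
  filter_upwards [eventually_ge_atTop 0] with R hR
  exact (hftc R hR).symm

theorem hasDerivAt_gaussianPDFReal (μ : ℝ) (v : ℝ≥0) (x : ℝ) :
    HasDerivAt (gaussianPDFReal μ v) (-((x - μ) / v) * gaussianPDFReal μ v x) x := by
  have hexponent :
      HasDerivAt (fun y => -(y - μ) ^ 2 / (2 * v)) (-(2 * (x - μ)) / (2 * v)) x := by
    simpa using (((hasDerivAt_id x).sub_const μ).pow 2).neg.div_const (2 * (v : ℝ))
  rw [gaussianPDFReal_def]
  refine (hexponent.exp.const_mul (√(2 * Real.pi * v))⁻¹).congr_deriv ?_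
  by_cases hv : (v : ℝ) = 0
  · simp [hv]
  · field_simp

theorem tendsto_gaussianPDFReal_cocompact (μ : ℝ) (v : ℝ≥0) :
    Tendsto (gaussianPDFReal μ v) (cocompact ℝ) (𝓝 0) := by
  rcases eq_zero_or_pos v with rfl | hv
  · rw [gaussianPDFReal_zero_var]
    exact tendsto_const_nhds
  have hexp := tendsto_rpow_abs_mul_exp_neg_mul_sq_cocompact (inv_pos.2 (mul_pos two_pos hv)) 0
  have hshift : Tendsto (fun x : ℝ => x - μ) (cocompact ℝ) (cocompact ℝ) :=
    (Homeomorph.subRight μ).map_cocompact.le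
  convert (hexp.comp hshift).const_mul (√(2 * Real.pi * v))⁻¹ using 1
  · ext x
    simp [gaussianPDFReal, div_eq_inv_mul]
  · simp

section Gaussian

variable {μ : ℝ} {v : ℝ≥0}

theorem integrable_gaussianReal_iff {E : Type*} [NormedAddCommGroup E] [NormedSpace ℝ E]
    {f : ℝ → E} (hv : v ≠ 0) :
    Integrable f (gaussianReal μ v) ↔ Integrable (fun x => gaussianPDFReal μ v x • f x) := by
  rw [gaussianReal_of_var_ne_zero μ hv, integrable_withDensity_iff_integrable_smul'
    (measurable_gaussianPDF μ v) (ae_of_all _ fun _ => gaussianPDF_lt_top)]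
  simp

theorem integral_sub_sq_gaussianReal :
    ∫ x, (x - μ) ^ 2 ∂gaussianReal μ v = v := by
  have h := variance_eq_integral (μ := gaussianReal μ v) measurable_id.aemeasurable
  rw [variance_id_gaussianReal] at h
  simpa [integral_id_gaussianReal] using h.symm

theorem integrable_sub_mul_gaussianReal {g : ℝ → ℝ} {C : ℝ}
    (hg : AEStronglyMeasurable g (gaussianReal μ v)) (hbound : ∀ x, |g x| ≤ C) :
    Integrable (fun x => (x - μ) * g x) (gaussianReal μ v) :=
  (((memLp_id_gaussianReal 1).integrable le_rfl).sub (integrable_const μ)).mul_bdd hg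
    (ae_of_all _ hbound)

/-- **Stein's lemma**. -/
theorem integral_sub_mul_gaussianReal {g g' : ℝ → ℝ} {s : Set ℝ} {C : ℝ}
    (hs : s.Countable) (hg : Continuous g) (hderiv : ∀ x ∉ s, HasDerivAt g (g' x) x)
    (hbound : ∀ x, |g x| ≤ C) (hg' : Integrable g' (gaussianReal μ v)) :
    ∫ x, (x - μ) * g x ∂gaussianReal μ v = v * ∫ x, g' x ∂gaussianReal μ v := by
  rcases eq_or_ne v 0 with rfl | hv
  · simp [gaussianReal_zero_var]
  set p := gaussianPDFReal μ v
  have hint := integrable_sub_mul_gaussianReal (μ := μ) (v := v) hg.aestronglyMeasurable hbound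
  have hF : ∀ x ∉ s, HasDerivAt (fun x => p x * g x) (p x • (g' x - (x - μ) * g x / v)) x :=
    fun x hx => ((hasDerivAt_gaussianPDFReal μ v x).mul (hderiv x hx)).congr_deriv (by
      rw [smul_eq_mul]; ring)
  have hlim : Tendsto (fun x => p x * g x) (cocompact ℝ) (𝓝 0) := by
    refine squeeze_zero_norm (fun x => ?_) (by simpa using
      (tendsto_gaussianPDFReal_cocompact μ v).const_mul C)
    rw [norm_mul, Real.norm_of_nonneg (gaussianPDFReal_nonneg μ v x), mul_comm]
    exact mul_le_mul_of_nonneg_right (hbound x) (gaussianPDFReal_nonneg μ v x)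
  have hzero := integral_of_hasDerivAt_off_countable_of_tendsto hs
    ((continuous_iff_continuousAt.2 fun x =>
      (hasDerivAt_gaussianPDFReal μ v x).continuousAt).mul hg) hF
    ((integrable_gaussianReal_iff hv).1 (hg'.sub (hint.div_const v)))
    (hlim.mono_left atBot_le_cocompact) (hlim.mono_left atTop_le_cocompact)
  rw [← integral_gaussianReal_eq_integral_smul hv, integral_sub hg' (hint.div_const _),
    integral_div, sub_self, sub_eq_zero] at hzero
  rw [hzero]
  field_simp [hv]

/-- **Stein's unbiased risk estimate** for the estimator `x + g x` of the mean `μ`. -/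
theorem integral_add_sub_sq_gaussianReal {g g' : ℝ → ℝ} {s : Set ℝ} {C : ℝ}
    (hs : s.Countable) (hg : Continuous g) (hderiv : ∀ x ∉ s, HasDerivAt g (g' x) x)
    (hbound : ∀ x, |g x| ≤ C) (hg' : Integrable g' (gaussianReal μ v)) :
    ∫ x, (x + g x - μ) ^ 2 ∂gaussianReal μ v
      = ∫ x, (v + 2 * v * g' x + g x ^ 2) ∂gaussianReal μ v := by
  have hsq : Integrable (fun x => (x - μ) ^ 2) (gaussianReal μ v) :=
    ((memLp_id_gaussianReal 2).sub (memLp_const μ)).integrable_sq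
  have hcross := integrable_sub_mul_gaussianReal (μ := μ) (v := v) hg.aestronglyMeasurable hbound
  have hg2 : Integrable (fun x => g x ^ 2) (gaussianReal μ v) :=
    Integrable.of_bound (hg.pow 2).aestronglyMeasurable (C ^ 2) (ae_of_all _ fun x => by
      rw [Real.norm_eq_abs, abs_pow]
      exact pow_le_pow_left₀ (abs_nonneg _) (hbound x) 2)
  calc ∫ x, (x + g x - μ) ^ 2 ∂gaussianReal μ v
      = ∫ x, ((x - μ) ^ 2 + 2 * ((x - μ) * g x) + g x ^ 2) ∂gaussianReal μ v := by
        congr with x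
        ring
    _ = v + 2 * (v * ∫ x, g' x ∂gaussianReal μ v) + ∫ x, g x ^ 2 ∂gaussianReal μ v := by
        rw [integral_add (f := fun x => (x - μ) ^ 2 + 2 * ((x - μ) * g x))
          (hsq.add (hcross.const_mul 2)) hg2, integral_add hsq (hcross.const_mul 2),
          integral_const_mul, integral_sub_sq_gaussianReal,
          integral_sub_mul_gaussianReal hs hg hderiv hbound hg']
    _ = ∫ x, (v + 2 * v * g' x + g x ^ 2) ∂gaussianReal μ v := by
        rw [integral_add (f := fun x => (v : ℝ) + 2 * v * g' x)
          ((integrable_const _).add (hg'.const_mul _)) hg2,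
          integral_add (integrable_const _) (hg'.const_mul _), integral_const_mul]
        simp [mul_assoc]

end Gaussian

theorem integrable_ite_sq_le_sq {μ : Measure ℝ} [IsFiniteMeasure μ] (t : ℝ) :
    Integrable (fun x => if x ^ 2 ≤ t ^ 2 then (1 : ℝ) else 0) μ :=
  Integrable.of_bound (Measurable.ite (measurableSet_le (by fun_prop) (by fun_prop))
    measurable_const measurable_const).aestronglyMeasurable 1
    (ae_of_all _ fun x => by split_ifs <;> simp)

section Clamp

variable {t : ℝ}

theorem softThresh_eq_sub_clamp (ht : 0 ≤ t) (x : ℝ) :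
    softThresh t x = x - max (-t) (min x t) := by
  unfold softThresh
  split_ifs with hup hlow hlow
  · linarith
  · rw [min_eq_right hup.le, max_eq_right (by linarith)]
    ring
  · rw [min_eq_left (by linarith), max_eq_left hlow.le]
    ring
  · rw [min_eq_left (not_lt.1 hup), max_eq_right (not_lt.1 hlow)]
    ring

theorem abs_clamp_le (ht : 0 ≤ t) (x : ℝ) : |max (-t) (min x t)| ≤ t :=
  abs_le.2 ⟨le_max_left _ _, max_le (by linarith) (min_le_right _ _)⟩

theorem clamp_sq (ht : 0 ≤ t) (x : ℝ) : max (-t) (min x t) ^ 2 = min (x ^ 2) (t ^ 2) := by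
  rcases le_total x (-t) with hx | hx
  · rw [min_eq_left (by linarith), max_eq_left hx, min_eq_right (by nlinarith), neg_sq]
  rcases le_total x t with hx' | hx'
  · rw [min_eq_left hx', max_eq_right hx, min_eq_left (by nlinarith)]
  · rw [min_eq_right hx', max_eq_right (by linarith), min_eq_right (by nlinarith)]

theorem hasDerivAt_clamp (ht : 0 ≤ t) {x : ℝ} (hx : x ∉ ({-t, t} : Set ℝ)) :
    HasDerivAt (fun y => max (-t) (min y t)) (if x ^ 2 ≤ t ^ 2 then 1 else 0) x := by
  simp only [mem_insert_iff, mem_singleton_iff, not_or] at hx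
  rcases lt_or_gt_of_ne hx.1 with hlt | hgt
  · rw [if_neg (by nlinarith)]
    refine (hasDerivAt_const x (-t)).congr_of_eventuallyEq ?_
    filter_upwards [Iio_mem_nhds hlt] with y hy
    rw [min_eq_left (by linarith [mem_Iio.1 hy]), max_eq_left (mem_Iio.1 hy).le]
  rcases lt_or_gt_of_ne hx.2 with hlt' | hgt'
  · rw [if_pos (by nlinarith)]
    refine (hasDerivAt_id x).congr_of_eventuallyEq ?_
    filter_upwards [Ioo_mem_nhds hgt hlt'] with y hy
    rw [min_eq_left hy.2.le, max_eq_right hy.1.le, id]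
  · rw [if_neg (by nlinarith)]
    refine (hasDerivAt_const x t).congr_of_eventuallyEq ?_
    filter_upwards [Ioi_mem_nhds hgt'] with y hy
    rw [min_eq_right (mem_Ioi.1 hy).le, max_eq_right (by linarith)]

end Clamp

theorem stmt12_general (μ σn t : ℝ) (ht : 0 ≤ t) :
    ∫ x, (softThresh t x - μ) ^ 2 ∂(gaussianReal μ (Real.toNNReal (σn ^ 2)))
      = ∫ x, (σn ^ 2 - 2 * σn ^ 2 * (if x ^ 2 ≤ t ^ 2 then (1 : ℝ) else 0)
            + min (x ^ 2) (t ^ 2)) ∂(gaussianReal μ (Real.toNNReal (σn ^ 2))) := by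
  have hv : (Real.toNNReal (σn ^ 2) : ℝ) = σn ^ 2 := Real.coe_toNNReal _ (sq_nonneg σn)
  have hsure := integral_add_sub_sq_gaussianReal (μ := μ) (v := Real.toNNReal (σn ^ 2))
    (g := fun x => -max (-t) (min x t)) (g' := fun x => -if x ^ 2 ≤ t ^ 2 then 1 else 0)
    ((countable_singleton t).insert (-t))
    (continuous_const.max (continuous_id.min continuous_const)).neg
    (fun _ hx => (hasDerivAt_clamp ht hx).neg) (fun x => (abs_neg _).trans_le (abs_clamp_le ht x))
    (integrable_ite_sq_le_sq t).neg
  have hestimator : ∀ x, softThresh t x - μ = x + -max (-t) (min x t) - μ := fun x => by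
    rw [softThresh_eq_sub_clamp ht]
    ring
  have hrisk : ∀ x, σn ^ 2 - 2 * σn ^ 2 * (if x ^ 2 ≤ t ^ 2 then (1 : ℝ) else 0)
      + min (x ^ 2) (t ^ 2) = Real.toNNReal (σn ^ 2)
        + 2 * Real.toNNReal (σn ^ 2) * -(if x ^ 2 ≤ t ^ 2 then 1 else 0)
        + (-max (-t) (min x t)) ^ 2 := fun x => by
    rw [hv, neg_sq, clamp_sq ht]
    ring
  simp_rw [hestimator, hrisk]
  exact hsure

theorem stmt12 (μ σn t : ℝ) (hσn : 0 < σn) (ht : 0 ≤ t) :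
    ∫ x, (softThresh t x - μ) ^ 2 ∂(gaussianReal μ (Real.toNNReal (σn ^ 2)))
      = ∫ x, (σn ^ 2 - 2 * σn ^ 2 * (if x ^ 2 ≤ t ^ 2 then (1 : ℝ) else 0)
            + min (x ^ 2) (t ^ 2)) ∂(gaussianReal μ (Real.toNNReal (σn ^ 2))) :=
  stmt12_general μ σn t ht
end

section
/- Local-average approximation error: let ψ : ℝ → ℝ be bounded with compact support and ∫ψ = 0, let ψ_{jk}(x) = 2^{j/2}ψ(2^j x − k), and let κ bound the number of k at each level j with ψ_{jk} not identically zero on [a,b]'s neighborhood. Suppose the coefficients satisfy ‖β_{j·}‖₂ ≤ c·2^{−j/2} for all j > J₁ where 2^{J₁} = n. Then for any 0 ≤ a < b ≤ 1, |(1/(b−a))∫_a^b Σ_{j>J₁} Σ_k β_{jk}ψ_{jk}(x) dx| ≤ C/(n(b−a)) for a constant C depending only on ψ, κ, c. -/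
/-!
With `Φ u = ∫ x in Iic u, ψ x`, the integral of `2^{j/2} ψ (2^j x - k)` over `[a, b]` is
`2^{-j/2} (Φ (2^j b - k) - Φ (2^j a - k))`. Since `∫ ψ = 0` and `ψ` vanishes outside `(-M, M)`,
`Φ` vanishes outside `(-M, M)` too, so at each endpoint at most `2M + 1` shifts `k` contribute,
each by at most `‖ψ‖₁`. Together with `|β_{jk}| ≤ c 2^{-j/2}` this bounds the level-`j` term
by a multiple of `2^{-j}`, and summing over `j > J₁` gives `2^{-J₁}`. Exchanging the series
with the integral is justified by the `L¹` bound `c ‖ψ‖₁ 2^{-j/2}` on level `j`, which comes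
from Cauchy–Schwarz on the coefficients.
-/

open MeasureTheory Finset

lemma integrable_of_abs_le_of_hasCompactSupport {ψ : ℝ → ℝ} {B : ℝ} (hbd : ∀ x, |ψ x| ≤ B)
    (hsupp : HasCompactSupport ψ) (hmeas : Measurable ψ) : Integrable ψ :=
  (integrableOn_iff_integrable_of_support_subset (subset_tsupport ψ)).1 <|
    Measure.integrableOn_of_bounded hsupp.isCompact.measure_lt_top.ne hmeas.aestronglyMeasurable
      (ae_of_all _ fun x => (Real.norm_eq_abs _).trans_le (hbd x))

section Primitive

variable {ψ : ℝ → ℝ}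

lemma abs_setIntegral_le_integral_abs (hψ : Integrable ψ) (s : Set ℝ) :
    |∫ x in s, ψ x| ≤ ∫ x, |ψ x| :=
  (abs_integral_le_integral_abs).trans <|
    setIntegral_le_integral hψ.abs (ae_of_all _ fun _ => abs_nonneg _)

lemma setIntegral_Iic_eq_zero_of_le_abs (hψ : Integrable ψ) (hψ0 : ∫ x, ψ x = 0) {M : ℝ}
    (hM : ∀ x, M ≤ |x| → ψ x = 0) {u : ℝ} (hu : M ≤ |u|) : ∫ x in Set.Iic u, ψ x = 0 := by
  rcases le_abs'.1 hu with hu | hu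
  · exact setIntegral_eq_zero_of_forall_eq_zero fun x (hx : x ≤ u) =>
      hM x (by linarith [neg_le_abs x])
  · have hIoi : ∫ x in Set.Ioi u, ψ x = 0 :=
      setIntegral_eq_zero_of_forall_eq_zero fun x (hx : u < x) =>
        hM x (by linarith [le_abs_self x])
    have := integral_add_compl (measurableSet_Iic (a := u)) hψ
    rwa [Set.compl_Iic, hIoi, add_zero, hψ0] at this

lemma intervalIntegral_comp_mul_sub (hψ : Integrable ψ) {r : ℝ} (hr : r ≠ 0) (a b d : ℝ) :
    ∫ x in a..b, ψ (r * x - d) =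
      r⁻¹ * ((∫ x in Set.Iic (r * b - d), ψ x) - ∫ x in Set.Iic (r * a - d), ψ x) := by
  rw [intervalIntegral.integral_comp_mul_sub ψ hr,
    ← intervalIntegral.integral_Iic_sub_Iic hψ.integrableOn hψ.integrableOn, smul_eq_mul]

lemma integral_abs_comp_mul_sub {s : ℝ} (hs : 0 < s) (d : ℝ) :
    ∫ x, |ψ (s * x - d)| = s⁻¹ * ∫ x, |ψ x| := by
  rw [Measure.integral_comp_mul_left (fun y => |ψ (y - d)|),
    integral_sub_right_eq_self (fun y => |ψ y|), smul_eq_mul, abs_of_pos (inv_pos.2 hs)]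

end Primitive

lemma card_filter_abs_sub_natCast_lt_le (S : Finset ℕ) (t : ℝ) {M : ℝ} (hM : 0 ≤ M) :
    (#(S.filter fun k : ℕ => |t - k| < M) : ℝ) ≤ 2 * M + 1 := by
  set T := S.filter fun k : ℕ => |t - k| < M
  rcases T.eq_empty_or_nonempty with hT | hT
  · rw [hT, card_empty, Nat.cast_zero]
    linarith
  obtain ⟨m, hm, hmin⟩ := T.exists_min_image id hT
  have hsub : T ⊆ Ico m (m + ⌈2 * M⌉₊) := by
    intro k hk
    have hkm : (k : ℝ) - m < 2 * M := by
      have := (mem_filter.1 hk).2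
      have := (mem_filter.1 hm).2
      rw [abs_lt] at *
      linarith
    have : (k : ℝ) < (m + ⌈2 * M⌉₊ : ℕ) := by
      push_cast
      linarith [Nat.le_ceil (2 * M)]
    exact mem_Ico.2 ⟨hmin k hk, by exact_mod_cast this⟩
  calc (#T : ℝ) ≤ #(Ico m (m + ⌈2 * M⌉₊)) := by exact_mod_cast card_le_card hsub
    _ = ⌈2 * M⌉₊ := by simp
    _ ≤ 2 * M + 1 := (Nat.ceil_lt_add_one (by positivity)).le

lemma sum_abs_comp_sub_natCast_le {Φ : ℝ → ℝ} {A M : ℝ} (hM : 0 ≤ M) (hA : ∀ u, |Φ u| ≤ A)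
    (hΦ : ∀ u, M ≤ |u| → Φ u = 0) (S : Finset ℕ) (t : ℝ) :
    ∑ k ∈ S, |Φ (t - k)| ≤ (2 * M + 1) * A := by
  have hsupp : ∀ k ∈ S, |Φ (t - k)| ≠ 0 → |t - k| < M := fun k _ hk =>
    lt_of_not_ge fun h => hk (by rw [hΦ _ h, abs_zero])
  calc ∑ k ∈ S, |Φ (t - k)| = ∑ k ∈ S.filter (fun k : ℕ => |t - k| < M), |Φ (t - k)| :=
        (sum_filter_of_ne hsupp).symm
    _ ≤ #(S.filter fun k : ℕ => |t - k| < M) • A := sum_le_card_nsmul _ _ _ fun k _ => hA _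
    _ ≤ (2 * M + 1) * A := by
        rw [nsmul_eq_mul]
        exact mul_le_mul_of_nonneg_right (card_filter_abs_sub_natCast_lt_le S t hM)
          ((abs_nonneg _).trans (hA 0))

section DilatedSum

variable {ψ : ℝ → ℝ} {s : ℝ} (S : Finset ℕ) (w : ℕ → ℝ)

lemma integrable_sum_comp_mul_sub (hψ : Integrable ψ) (hs : s ≠ 0) :
    Integrable fun x => ∑ k ∈ S, w k * ψ (s * x - k) :=
  integrable_finsetSum _ fun k _ =>
    ((hψ.comp_sub_right (k : ℝ)).comp_mul_left' hs).const_mul (w k)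

lemma abs_intervalIntegral_sum_comp_mul_sub_le (hψ : Integrable ψ) (hψ0 : ∫ x, ψ x = 0)
    {M : ℝ} (hM0 : 0 ≤ M) (hM : ∀ x, M ≤ |x| → ψ x = 0) (hs : 0 < s) (a b : ℝ)
    {W : ℝ} (hW : 0 ≤ W) (hw : ∀ k ∈ S, |w k| ≤ W) :
    |∫ x in a..b, ∑ k ∈ S, w k * ψ (s * x - k)| ≤ 2 * (2 * M + 1) * (∫ x, |ψ x|) * W / s := by
  set Φ : ℝ → ℝ := fun u => ∫ x in Set.Iic u, ψ x
  have hΦ : ∀ t, ∑ k ∈ S, |Φ (t - k)| ≤ (2 * M + 1) * ∫ x, |ψ x| :=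
    sum_abs_comp_sub_natCast_le hM0 (fun u => abs_setIntegral_le_integral_abs hψ _)
      (fun u hu => setIntegral_Iic_eq_zero_of_le_abs hψ hψ0 hM hu) S
  have hint : ∀ k : ℕ, IntervalIntegrable (fun x => w k * ψ (s * x - k)) volume a b := fun k =>
    ((integrable_sum_comp_mul_sub {k} w hψ hs.ne').congr
      (ae_of_all _ fun _ => by simp)).intervalIntegrable
  calc |∫ x in a..b, ∑ k ∈ S, w k * ψ (s * x - k)|
      = |∑ k ∈ S, w k * (s⁻¹ * (Φ (s * b - k) - Φ (s * a - k)))| := by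
        rw [intervalIntegral.integral_finsetSum fun k _ => hint k]
        simp only [intervalIntegral.integral_const_mul,
          intervalIntegral_comp_mul_sub hψ hs.ne', Φ]
    _ ≤ ∑ k ∈ S, W * (s⁻¹ * (|Φ (s * b - k)| + |Φ (s * a - k)|)) := by
        refine (abs_sum_le_sum_abs _ _).trans (sum_le_sum fun k hk => ?_)
        rw [abs_mul, abs_mul, abs_of_pos (inv_pos.2 hs)]
        gcongr
        exacts [hw k hk, abs_sub _ _]
    _ = W * s⁻¹ * (∑ k ∈ S, |Φ (s * b - k)| + ∑ k ∈ S, |Φ (s * a - k)|) := by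
        rw [← sum_add_distrib, mul_sum]
        exact sum_congr rfl fun k _ => by ring
    _ ≤ W * s⁻¹ * ((2 * M + 1) * (∫ x, |ψ x|) + (2 * M + 1) * ∫ x, |ψ x|) := by
        gcongr <;> exact hΦ _
    _ = 2 * (2 * M + 1) * (∫ x, |ψ x|) * W / s := by ring

lemma integral_abs_sum_comp_mul_sub_le (hψ : Integrable ψ) (hs : 0 < s) (T : Set ℝ) :
    ∫ x in T, |∑ k ∈ S, w k * ψ (s * x - k)| ≤ (∑ k ∈ S, |w k|) * (∫ x, |ψ x|) / s := by
  have hint : ∀ k : ℕ, Integrable fun x => |w k| * |ψ (s * x - k)| := fun k =>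
    (integrable_sum_comp_mul_sub {k} w hψ hs.ne').abs.congr (ae_of_all _ fun _ => by simp)
  calc ∫ x in T, |∑ k ∈ S, w k * ψ (s * x - k)|
      ≤ ∫ x, |∑ k ∈ S, w k * ψ (s * x - k)| :=
        setIntegral_le_integral (integrable_sum_comp_mul_sub S w hψ hs.ne').abs
          (ae_of_all _ fun _ => abs_nonneg _)
    _ ≤ ∫ x, ∑ k ∈ S, |w k| * |ψ (s * x - k)| :=
        integral_mono (integrable_sum_comp_mul_sub S w hψ hs.ne').abs
          (integrable_finsetSum _ fun k _ => hint k) fun x =>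
            (abs_sum_le_sum_abs _ _).trans_eq (sum_congr rfl fun k _ => abs_mul _ _)
    _ = (∑ k ∈ S, |w k|) * (∫ x, |ψ x|) / s := by
        rw [integral_finsetSum _ fun k _ => hint k, sum_mul, sum_div]
        refine sum_congr rfl fun k _ => ?_
        rw [integral_const_mul, integral_abs_comp_mul_sub hs]
        ring

end DilatedSum

lemma abs_le_sqrt_sum_sq {ι : Type*} {S : Finset ι} (f : ι → ℝ) {i : ι} (hi : i ∈ S) :
    |f i| ≤ √(∑ k ∈ S, f k ^ 2) :=
  Real.abs_le_sqrt (single_le_sum (fun k _ => sq_nonneg (f k)) hi)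

lemma sum_abs_le_sqrt_card_mul_sqrt_sum_sq {ι : Type*} (S : Finset ι) (f : ι → ℝ) :
    ∑ k ∈ S, |f k| ≤ √(#S : ℝ) * √(∑ k ∈ S, f k ^ 2) := by
  rw [← Real.sqrt_mul (Nat.cast_nonneg _)]
  refine (le_abs_self _).trans (Real.abs_le_sqrt ?_)
  simpa only [sq_abs] using sq_sum_le_card_mul_sum_sq (s := S) (f := fun k => |f k|)

lemma two_rpow_div_two (j : ℕ) : (2 : ℝ) ^ ((j : ℝ) / 2) = √2 ^ j := by
  rw [Real.sqrt_eq_rpow, ← Real.rpow_natCast, ← Real.rpow_mul zero_le_two]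
  ring_nf

lemma two_rpow_neg_div_two (j : ℕ) : (2 : ℝ) ^ (-(j : ℝ) / 2) = (√2 ^ j)⁻¹ := by
  rw [neg_div, Real.rpow_neg zero_le_two, two_rpow_div_two]

lemma sqrt_two_pow_sq (j : ℕ) : (√2 ^ j) ^ 2 = 2 ^ j := by
  rw [← pow_mul, mul_comm, pow_mul, Real.sq_sqrt zero_le_two]

section WaveletDetail

variable {ψ : ℝ → ℝ} {β : ℕ → ℝ} {j : ℕ} {c : ℝ}

noncomputable def waveletDetail (ψ : ℝ → ℝ) (β : ℕ → ℝ) (j : ℕ) (x : ℝ) : ℝ :=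
  ∑ k ∈ range (2 ^ j), β k * (2 : ℝ) ^ ((j : ℝ) / 2) * ψ ((2 : ℝ) ^ j * x - k)

lemma nonneg_of_sqrt_sum_sq_le (hβ : √(∑ k ∈ range (2 ^ j), β k ^ 2) ≤ c * 2 ^ (-(j : ℝ) / 2)) :
    0 ≤ c :=
  nonneg_of_mul_nonneg_left ((Real.sqrt_nonneg _).trans hβ) (by positivity)

lemma abs_mul_two_rpow_le (hβ : √(∑ k ∈ range (2 ^ j), β k ^ 2) ≤ c * 2 ^ (-(j : ℝ) / 2))
    {k : ℕ} (hk : k ∈ range (2 ^ j)) : |β k * (2 : ℝ) ^ ((j : ℝ) / 2)| ≤ c := by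
  rw [two_rpow_neg_div_two] at hβ
  have hq : 0 < √2 ^ j := by positivity
  rw [abs_mul, two_rpow_div_two, abs_of_pos hq, ← le_div_iff₀ hq, div_eq_mul_inv]
  exact (abs_le_sqrt_sum_sq β hk).trans hβ

lemma sum_abs_mul_two_rpow_le (hβ : √(∑ k ∈ range (2 ^ j), β k ^ 2) ≤ c * 2 ^ (-(j : ℝ) / 2)) :
    ∑ k ∈ range (2 ^ j), |β k * (2 : ℝ) ^ ((j : ℝ) / 2)| ≤ c * √2 ^ j := by
  have hc := nonneg_of_sqrt_sum_sq_le hβ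
  rw [two_rpow_neg_div_two] at hβ
  have hq : 0 < √2 ^ j := by positivity
  have hcard : √(#(range (2 ^ j)) : ℝ) = √2 ^ j := by
    rw [card_range, Nat.cast_pow, Nat.cast_ofNat, ← sqrt_two_pow_sq, Real.sqrt_sq hq.le]
  simp only [abs_mul, two_rpow_div_two, abs_of_pos hq, ← sum_mul]
  calc (∑ k ∈ range (2 ^ j), |β k|) * √2 ^ j
      ≤ √2 ^ j * (c * (√2 ^ j)⁻¹) * √2 ^ j := by
        gcongr
        exact (sum_abs_le_sqrt_card_mul_sqrt_sum_sq _ β).trans (by rw [hcard]; gcongr)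
    _ = c * √2 ^ j := by field_simp

lemma abs_intervalIntegral_waveletDetail_le (hψ : Integrable ψ) (hψ0 : ∫ x, ψ x = 0) {M : ℝ}
    (hM0 : 0 ≤ M) (hM : ∀ x, M ≤ |x| → ψ x = 0)
    (hβ : √(∑ k ∈ range (2 ^ j), β k ^ 2) ≤ c * 2 ^ (-(j : ℝ) / 2)) (a b : ℝ) :
    |∫ x in a..b, waveletDetail ψ β j x| ≤ 2 * (2 * M + 1) * (∫ x, |ψ x|) * c * 2⁻¹ ^ j :=
  (abs_intervalIntegral_sum_comp_mul_sub_le _ _ hψ hψ0 hM0 hM (by positivity) a b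
    (nonneg_of_sqrt_sum_sq_le hβ) fun _ hk => abs_mul_two_rpow_le hβ hk).trans_eq
    (by rw [inv_pow, div_eq_mul_inv])

lemma setIntegral_abs_waveletDetail_le (hψ : Integrable ψ)
    (hβ : √(∑ k ∈ range (2 ^ j), β k ^ 2) ≤ c * 2 ^ (-(j : ℝ) / 2)) (T : Set ℝ) :
    ∫ x in T, |waveletDetail ψ β j x| ≤ c * (∫ x, |ψ x|) * (√2 / 2) ^ j := by
  refine (integral_abs_sum_comp_mul_sub_le _ _ hψ (by positivity) T).trans ?_
  calc (∑ k ∈ range (2 ^ j), |β k * (2 : ℝ) ^ ((j : ℝ) / 2)|) * (∫ x, |ψ x|) / 2 ^ j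
      ≤ c * √2 ^ j * (∫ x, |ψ x|) / 2 ^ j := by
        gcongr
        exact sum_abs_mul_two_rpow_le hβ
    _ = c * (∫ x, |ψ x|) * (√2 / 2) ^ j := by rw [div_pow]; ring

end WaveletDetail

lemma hasSum_ite_lt_inv_two_pow (n : ℕ) :
    HasSum (fun j : ℕ => if n < j then (2 : ℝ)⁻¹ ^ j else 0) ((2 : ℝ)⁻¹ ^ n) := by
  have hsum : Summable fun j : ℕ => if n < j then (2 : ℝ)⁻¹ ^ j else 0 :=
    .of_nonneg_of_le (fun j => by positivity) (fun j => by split_ifs <;> simp)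
      (summable_geometric_of_lt_one (by norm_num) (by norm_num : (2 : ℝ)⁻¹ < 1))
  have h := tsum_geometric_inv_two_ge (n + 1)
  simp only [Nat.add_one_le_iff] at h
  convert hsum.hasSum using 1
  rw [h]
  ring

lemma abs_integral_tsum_le {α ι : Type*} [MeasurableSpace α] [Countable ι] {μ : Measure α}
    {F : ι → α → ℝ} {g : ι → ℝ} {a : ℝ} (hF : ∀ i, Integrable (F i) μ)
    (hF_sum : Summable fun i => ∫ x, |F i x| ∂μ) (hg : HasSum g a)
    (hFg : ∀ i, |∫ x, F i x ∂μ| ≤ g i) :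
    |∫ x, ∑' i, F i x ∂μ| ≤ a := by
  rw [← integral_tsum_of_summable_integral_norm hF hF_sum]
  exact tsum_of_norm_bounded hg fun i => (Real.norm_eq_abs _).trans_le (hFg i)

theorem stmt16_general (ψ : ℝ → ℝ) (B : ℝ) (hψbd : ∀ x, |ψ x| ≤ B)
    (hψsupp : HasCompactSupport ψ) (hψmeas : Measurable ψ)
    (hψint : ∫ x, ψ x = 0)
    (c : ℝ) (hc : 0 < c) :
    ∃ C : ℝ, 0 < C ∧ ∀ (J₁ : ℕ) (β : ℕ → ℕ → ℝ),
      (∀ j : ℕ, J₁ < j →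
        Real.sqrt (∑ k ∈ Finset.range (2 ^ j), β j k ^ 2) ≤ c * (2 : ℝ) ^ (-(j : ℝ) / 2)) →
      ∀ a b : ℝ, 0 ≤ a → a < b → b ≤ 1 →
        |(b - a)⁻¹ * ∫ x in a..b,
            ∑' j : ℕ, if J₁ < j then
                ∑ k ∈ Finset.range (2 ^ j),
                  β j k * (2 : ℝ) ^ ((j : ℝ) / 2) * ψ ((2 : ℝ) ^ j * x - k)
              else 0|
          ≤ C / ((2 : ℝ) ^ J₁ * (b - a)) := by
  have hψ := integrable_of_abs_le_of_hasCompactSupport hψbd hψsupp hψmeas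
  obtain ⟨M, hM0, hM⟩ := hψsupp.exists_pos_le_norm
  set C₀ := 2 * (2 * M + 1) * (∫ x, |ψ x|) * c
  refine ⟨C₀ + 1, by positivity, fun J₁ β hβ a b _ hab _ => ?_⟩
  set F : ℕ → ℝ → ℝ := fun j x => if J₁ < j then waveletDetail ψ (β j) j x else 0
  have hF : ∀ j, Integrable (F j) (volume.restrict (Set.Ioc a b)) := fun j => by
    by_cases hj : J₁ < j <;> simp only [F, hj, if_true, if_false]
    · exact (integrable_sum_comp_mul_sub _ _ hψ (by positivity)).integrableOn
    · exact integrable_zero _ _ _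
  have hF_sum : Summable fun j => ∫ x in Set.Ioc a b, |F j x| := by
    refine Summable.of_nonneg_of_le (fun j => integral_nonneg fun _ => abs_nonneg _) (fun j => ?_)
      ((summable_geometric_of_lt_one (r := √2 / 2) (by positivity)
        (by linarith [Real.sqrt_two_lt_three_halves])).mul_left (c * ∫ x, |ψ x|))
    by_cases hj : J₁ < j <;> simp only [F, hj, if_true, if_false]
    · exact setIntegral_abs_waveletDetail_le hψ (hβ j hj) _
    · simp only [abs_zero, integral_zero]
      positivity
  have hFg : ∀ j, |∫ x in Set.Ioc a b, F j x| ≤ C₀ * if J₁ < j then 2⁻¹ ^ j else 0 := fun j => by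
    by_cases hj : J₁ < j <;> simp only [F, hj, if_true, if_false]
    · rw [← intervalIntegral.integral_of_le hab.le]
      exact abs_intervalIntegral_waveletDetail_le hψ hψint hM0.le hM (hβ j hj) a b
    · simp
  have hbound := abs_integral_tsum_le hF hF_sum ((hasSum_ite_lt_inv_two_pow J₁).mul_left C₀) hFg
  rw [intervalIntegral.integral_of_le hab.le, abs_mul, abs_inv, abs_of_pos (sub_pos.2 hab)]
  calc (b - a)⁻¹ * |∫ x in Set.Ioc a b, ∑' j, F j x|
      ≤ (b - a)⁻¹ * (C₀ * 2⁻¹ ^ J₁) := by gcongr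
    _ = C₀ / (2 ^ J₁ * (b - a)) := by rw [inv_pow]; field_simp
    _ ≤ (C₀ + 1) / (2 ^ J₁ * (b - a)) :=
      div_le_div_of_nonneg_right (by linarith) (mul_nonneg (by positivity) (sub_nonneg.2 hab.le))

theorem stmt16 (ψ : ℝ → ℝ) (B : ℝ) (hψbd : ∀ x, |ψ x| ≤ B)
    (hψsupp : HasCompactSupport ψ) (hψmeas : Measurable ψ)
    (hψint : ∫ x, ψ x = 0)
    (κ : ℕ)
    (hκ : ∀ (j : ℕ) (x : ℝ),
      Set.ncard {k : ℕ | k < 2 ^ j ∧ ψ ((2 : ℝ) ^ j * x - (k : ℝ)) ≠ 0} ≤ κ)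
    (c : ℝ) (hc : 0 < c) :
    ∃ C : ℝ, 0 < C ∧ ∀ (J₁ : ℕ) (β : ℕ → ℕ → ℝ),
      (∀ j : ℕ, J₁ < j →
        Real.sqrt (∑ k ∈ Finset.range (2 ^ j), β j k ^ 2) ≤ c * (2 : ℝ) ^ (-(j : ℝ) / 2)) →
      ∀ a b : ℝ, 0 ≤ a → a < b → b ≤ 1 →
        |(b - a)⁻¹ * ∫ x in a..b,
            ∑' j : ℕ, if J₁ < j then
                ∑ k ∈ Finset.range (2 ^ j),
                  β j k * (2 : ℝ) ^ ((j : ℝ) / 2) * ψ ((2 : ℝ) ^ j * x - k)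
              else 0|
          ≤ C / ((2 : ℝ) ^ J₁ * (b - a)) :=
  stmt16_general ψ B hψbd hψsupp hψmeas hψint c hc
end
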